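/- arXiv:1806.09142 — 9 statements merged into one kernel-verified Lean document; each statement's English description precedes it below -/
import Mathlib

section
/- For any positive integer n and non-negative integer l with l ≤ n, we have 2·∑_{k=l+1}^{n} (-1)^k · C(n,k)/C(n+k,k) = ((-1)^{l+1}/n) · (n-l)·C(n,l)/C(n+l,l). -/
/-!
Put `g l = (n - l) C(n,l) / C(n+l,l)`. Since `C(n,l+1) / C(n+l+1,l+1)` is
`C(n,l) / C(n+l,l)` times `(n - l) / (n + l + 1)`, one gets
`g l + g (l+1) = 2 n C(n,l+1) / C(n+l+1,l+1)`. Hence the right-hand side of the identity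
changes by exactly the summand `2 (-1)^(l+1) C(n,l+1) / C(n+l+1,l+1)` when `l` drops by one,
and the identity follows by descending induction on `l`, starting from `g l = 0` for `l ≥ n`.
-/

lemma choose_div_choose_add_succ {n l : ℕ} (hl : l ≤ n) :
    (n.choose (l + 1) : ℝ) / (n + (l + 1)).choose (l + 1)
      = n.choose l / (n + l).choose l * (((n : ℝ) - l) / (n + l + 1)) := by
  have hnum : (n.choose (l + 1) : ℝ) = n.choose l * ((n : ℝ) - l) / (l + 1) := by
    rw [eq_div_iff (by positivity), ← Nat.cast_sub hl]
    exact_mod_cast Nat.choose_succ_right_eq n l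
  have hden : ((n + (l + 1)).choose (l + 1) : ℝ) = (n + l + 1) * (n + l).choose l / (l + 1) := by
    rw [eq_div_iff (by positivity), ← add_assoc]
    exact_mod_cast (Nat.add_one_mul_choose_eq (n + l) l).symm
  have hpos : ((n + l).choose l : ℝ) ≠ 0 := by
    exact_mod_cast (Nat.choose_pos (by omega)).ne'
  rw [hnum, hden]
  field_simp

lemma sub_mul_choose_add_sub_mul_choose_succ {n l : ℕ} (hl : l ≤ n) :
    ((n : ℝ) - l) * n.choose l / (n + l).choose l
        + ((n : ℝ) - (l + 1 : ℕ)) * n.choose (l + 1) / (n + (l + 1)).choose (l + 1)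
      = 2 * n * (n.choose (l + 1) / (n + (l + 1)).choose (l + 1)) := by
  have hpos : ((n + l).choose l : ℝ) ≠ 0 := by
    exact_mod_cast (Nat.choose_pos (by omega)).ne'
  rw [mul_div_assoc _ (n.choose (l + 1) : ℝ), choose_div_choose_add_succ hl]
  push_cast
  field_simp
  ring

lemma sub_mul_choose_of_le {n l : ℕ} (h : n ≤ l) : ((n : ℝ) - l) * n.choose l = 0 := by
  rcases h.eq_or_lt with rfl | hlt
  · simp
  · simp [Nat.choose_eq_zero_of_lt hlt]

theorem stmt0_general (n l : ℕ) :
    2 * ∑ k ∈ Finset.Icc (l + 1) n,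
        (-1 : ℝ) ^ k * (n.choose k) / ((n + k).choose k)
      = ((-1 : ℝ) ^ (l + 1) / n) * (((n : ℝ) - l) * (n.choose l) / ((n + l).choose l)) := by
  induction h : n - l generalizing l with
  | zero =>
    rw [Finset.Icc_eq_empty (by omega), sub_mul_choose_of_le (by omega)]
    simp
  | succ d ih =>
    have hn : (n : ℝ) ≠ 0 := by exact_mod_cast (show n ≠ 0 by omega)
    rw [← Finset.add_sum_Ioc_eq_sum_Icc (by omega), ← Finset.Icc_add_one_left_eq_Ioc, mul_add,
      ih (l + 1) (by omega),
      eq_sub_of_add_eq (sub_mul_choose_add_sub_mul_choose_succ (l := l) (by omega))]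
    field_simp
    ring

theorem stmt0 (n l : ℕ) (hn : 0 < n) (hl : l ≤ n) :
    2 * ∑ k ∈ Finset.Icc (l + 1) n,
        (-1 : ℝ) ^ k * (n.choose k) / ((n + k).choose k)
      = ((-1 : ℝ) ^ (l + 1) / n) * (((n : ℝ) - l) * (n.choose l) / ((n + l).choose l)) :=
  stmt0_general n l
end

section
/- For any positive integer n and non-negative integer l with l ≤ n, we have 2·∑_{k=l+1}^{n} k·C(n,k)/C(n+k,k) = (n-l)·C(n,l)/C(n+l,l). -/
/-!
With `g k = (n - k) C(n,k) / C(n+k,k)`, the identities `C(n,k+1) (k+1) = C(n,k) (n-k)` and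
`C(n+k+1,k+1) (k+1) = (n+k+1) C(n+k,k)` give `g k - g (k+1) = 2 (k+1) C(n,k+1) / C(n+k+1,k+1)`,
so the sum telescopes to `g l - g n = g l`.
-/

open Finset

lemma cast_choose_succ_mul (n j : ℕ) :
    (n.choose (j + 1) : ℝ) * (j + 1) = n.choose j * ((n : ℝ) - j) := by
  rcases le_or_gt j n with hjn | hnj
  · have h := congrArg (Nat.cast (R := ℝ)) (Nat.choose_succ_right_eq n j)
    push_cast [Nat.cast_sub hjn] at h
    exact h
  · simp [Nat.choose_eq_zero_of_lt hnj, Nat.choose_eq_zero_of_lt (hnj.trans (Nat.lt_succ_self j))]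

lemma sub_choose_div_choose_add_sub_succ (n j : ℕ) :
    ((n : ℝ) - j) * n.choose j / (n + j).choose j
      - ((n : ℝ) - (j + 1)) * n.choose (j + 1) / (n + (j + 1)).choose (j + 1)
      = 2 * ((j : ℝ) + 1) * n.choose (j + 1) / (n + (j + 1)).choose (j + 1) := by
  have hd : ((n + j).choose j : ℝ) ≠ 0 :=
    Nat.cast_ne_zero.2 (Nat.choose_pos (Nat.le_add_left j n)).ne'
  have hd' : ((n + (j + 1)).choose (j + 1) : ℝ) ≠ 0 :=
    Nat.cast_ne_zero.2 (Nat.choose_pos (Nat.le_add_left (j + 1) n)).ne'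
  have hnum := cast_choose_succ_mul n j
  have hden : ((n + (j + 1)).choose (j + 1) : ℝ) * (j + 1)
      = ((n : ℝ) + j + 1) * (n + j).choose j := by
    exact_mod_cast (Nat.add_one_mul_choose_eq (n + j) j).symm
  field_simp
  linear_combination (-((n + (j + 1)).choose (j + 1) : ℝ)) * hnum + (n.choose (j + 1) : ℝ) * hden

theorem stmt1_general (n l : ℕ) (hl : l ≤ n) :
    2 * ∑ k ∈ Finset.Icc (l + 1) n, (k : ℝ) * (n.choose k) / ((n + k).choose k)
      = ((n : ℝ) - l) * (n.choose l) / ((n + l).choose l) := by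
  set g : ℕ → ℝ := fun k => ((n : ℝ) - k) * n.choose k / (n + k).choose k with hg
  have hgn : g n = 0 := by simp [hg]
  calc 2 * ∑ k ∈ Icc (l + 1) n, (k : ℝ) * n.choose k / (n + k).choose k
      = ∑ j ∈ Ico l n, 2 * ((j + 1 : ℕ) : ℝ) * n.choose (j + 1) / (n + (j + 1)).choose (j + 1) := by
        rw [mul_sum, ← Ico_add_one_right_eq_Icc, ← sum_Ico_add' _ l n 1]
        simp only [mul_div_assoc, mul_assoc]
    _ = ∑ j ∈ Ico l n, (g j - g (j + 1)) := by
        refine sum_congr rfl fun j _ => ?_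
        simpa [hg] using (sub_choose_div_choose_add_sub_succ n j).symm
    _ = -∑ j ∈ Ico l n, (g (j + 1) - g j) := by simp only [← sum_neg_distrib, neg_sub]
    _ = g l := by rw [sum_Ico_sub (f := g) hl, hgn, zero_sub, neg_neg]

theorem stmt1 (n l : ℕ) (hn : 0 < n) (hl : l ≤ n) :
    2 * ∑ k ∈ Finset.Icc (l + 1) n, (k : ℝ) * (n.choose k) / ((n + k).choose k)
      = ((n : ℝ) - l) * (n.choose l) / ((n + l).choose l) :=
  stmt1_general n l hl
end

section
/- For any integer n ≥ 2, we have ∑_{k=1}^{n} (-1)^k · k² · C(n,k)/C(n+k,k) = 0. -/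
/-!
The summand is Gosper-summable: with
`G(k) = (-1)^(k+1) k (k-1) (k+n) C(n,k) / (2 (n-1) C(n+k,k))`
it equals `G(k+1) - G(k)`; through the ratios `C(n,k+1)/C(n,k) = (n-k)/(k+1)` and
`C(n+k+1,k+1)/C(n+k,k) = (n+k+1)/(k+1)` this is an identity of rational functions in `n` and `k`.
So the sum telescopes to `G(n+1) - G(1)`, and both vanish, by `C(n,n+1) = 0` and the factor `k - 1`.
-/

open Finset

theorem Nat.cast_choose_succ_right_mul {R : Type*} [CommRing R] (n k : ℕ) :
    (n.choose (k + 1) : R) * (k + 1) = n.choose k * (n - k) := by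
  rcases le_or_gt k n with hkn | hnk
  · have h := congrArg (Nat.cast : ℕ → R) (Nat.choose_succ_right_eq n k)
    push_cast [Nat.cast_sub hkn] at h
    exact h
  · simp [Nat.choose_eq_zero_of_lt hnk, Nat.choose_eq_zero_of_lt (Nat.lt_succ_of_lt hnk)]

theorem Nat.cast_add_choose_succ_mul {R : Type*} [CommSemiring R] (n k : ℕ) :
    ((n + (k + 1)).choose (k + 1) : R) * (k + 1) = (n + k).choose k * (n + k + 1) := by
  have h := congrArg (Nat.cast : ℕ → R) (Nat.add_one_mul_choose_eq (n + k) k)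
  push_cast at h
  rw [← add_assoc, ← h, mul_comm]

section
variable {K : Type*} [Field K]

def chooseRatioTerm (n k : ℕ) : K :=
  (-1) ^ k * (k : K) ^ 2 * n.choose k / (n + k).choose k

def chooseRatioAntidiff (n k : ℕ) : K :=
  (-1) ^ (k + 1) * (k * (k - 1) * (k + n)) * n.choose k / (2 * (n - 1) * (n + k).choose k)

theorem chooseRatioTerm_eq_sub [CharZero K] {n : ℕ} (hn : (n : K) ≠ 1) (k : ℕ) :
    chooseRatioTerm n k = chooseRatioAntidiff (K := K) n (k + 1) - chooseRatioAntidiff n k := by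
  have hn1 : (n : K) - 1 ≠ 0 := sub_ne_zero.mpr hn
  have hk1 : (k : K) + 1 ≠ 0 := by exact_mod_cast k.succ_ne_zero
  have hnk1 : (n : K) + k + 1 ≠ 0 := by exact_mod_cast (n + k).succ_ne_zero
  have hB : ((n + k).choose k : K) ≠ 0 := by
    exact_mod_cast (Nat.choose_pos (Nat.le_add_left k n)).ne'
  have hA : (n.choose (k + 1) : K) = n.choose k * (n - k) / (k + 1) := by
    rw [eq_div_iff hk1, Nat.cast_choose_succ_right_mul]
  have hB' : ((n + (k + 1)).choose (k + 1) : K) = (n + k).choose k * (n + k + 1) / (k + 1) := by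
    rw [eq_div_iff hk1, Nat.cast_add_choose_succ_mul]
  unfold chooseRatioTerm chooseRatioAntidiff
  push_cast
  rw [hA, hB']
  field_simp
  ring

theorem chooseRatioAntidiff_one (n : ℕ) : chooseRatioAntidiff (K := K) n 1 = 0 := by
  simp [chooseRatioAntidiff]

theorem chooseRatioAntidiff_succ_self (n : ℕ) : chooseRatioAntidiff (K := K) n (n + 1) = 0 := by
  simp [chooseRatioAntidiff]

theorem sum_chooseRatioTerm_eq_zero [CharZero K] {n : ℕ} (hn : (n : K) ≠ 1) :
    ∑ k ∈ Icc 1 n, chooseRatioTerm (K := K) n k = 0 := by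
  rcases n.eq_zero_or_pos with rfl | hpos
  · simp
  rw [sum_congr rfl fun k _ => chooseRatioTerm_eq_sub hn k, sum_Icc_sub hpos,
    chooseRatioAntidiff_one, chooseRatioAntidiff_succ_self, sub_zero]

end

theorem stmt2 (n : ℕ) (hn : 2 ≤ n) :
    ∑ k ∈ Finset.Icc 1 n, (-1 : ℝ) ^ k * (k : ℝ) ^ 2 * (n.choose k) / ((n + k).choose k) = 0 := by
  have hn1 : (n : ℝ) ≠ 1 := by exact_mod_cast (by omega : n ≠ 1)
  exact sum_chooseRatioTerm_eq_zero hn1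
end

section
/- For any positive integers n and l with l ≤ n, we have ∑_{k=l}^{n} k·C(n,k)·2^{Δ(k,l)}/C(n+k,k) = n·C(n,l)/C(n+l,l), where Δ(a,b) = 0 if a = b and Δ(a,b) = 1 otherwise. -/
def Δ (a b : ℕ) : ℕ := if a = b then 0 else 1

/-!
Write `a k = C(n,k) / C(n+k,k)`. Since `2 ^ Δ k l` doubles every term but the first, the left-hand
side is `2 ∑_{k=l}^n k a k - l a l`, so it suffices that `2 ∑_{k=l}^n k a k = (n + l) a l`. This
follows by descending induction on `l` from the ratio `(n + l + 1) a (l + 1) = (n - l) a l`.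
-/

open Finset

theorem sum_Icc_mul_two_pow_Δ_add {R : Type*} [CommSemiring R] (f : ℕ → R) {l n : ℕ}
    (hln : l ≤ n) :
    ∑ k ∈ Icc l n, f k * 2 ^ Δ k l + f l = 2 * ∑ k ∈ Icc l n, f k := by
  have hΔ : ∀ k ∈ Ioc l n, f k * 2 ^ Δ k l = 2 * f k := fun k hk => by
    rw [Δ, if_neg (mem_Ioc.1 hk).1.ne', pow_one, mul_comm]
  rw [Icc_eq_cons_Ioc hln, sum_cons, sum_cons, sum_congr rfl hΔ, ← mul_sum, Δ, if_pos rfl]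
  ring

theorem add_add_one_mul_choose_div_choose (n l : ℕ) :
    (n + l + 1 : ℝ) * ((n.choose (l + 1) : ℝ) / (n + (l + 1)).choose (l + 1))
      = (n - l : ℕ) * ((n.choose l : ℝ) / (n + l).choose l) := by
  have hpos : (0 : ℝ) < (n + l).choose l := by exact_mod_cast Nat.choose_pos (by omega)
  have hpos' : (0 : ℝ) < (n + (l + 1)).choose (l + 1) := by exact_mod_cast Nat.choose_pos (by omega)
  have hbig : ((n + l + 1).choose (l + 1) : ℝ) * (l + 1) = (n + l + 1) * (n + l).choose l := by
    exact_mod_cast (Nat.add_one_mul_choose_eq (n + l) l).symm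
  have hsmall : (n.choose (l + 1) : ℝ) * (l + 1) = n.choose l * (n - l : ℕ) := by
    exact_mod_cast Nat.choose_succ_right_eq n l
  rw [← add_assoc] at hpos' ⊢
  field_simp
  refine mul_right_cancel₀ (by positivity : (l + 1 : ℝ) ≠ 0) ?_
  linear_combination (n + l + 1 : ℝ) * (n + l).choose l * hsmall
    - (n.choose l : ℝ) * (n - l : ℕ) * hbig

theorem two_mul_sum_Icc_mul_choose_div_choose {n l : ℕ} (hln : l ≤ n) :
    2 * ∑ k ∈ Icc l n, (k : ℝ) * ((n.choose k : ℝ) / (n + k).choose k)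
      = (n + l : ℝ) * ((n.choose l : ℝ) / (n + l).choose l) := by
  induction hln using Nat.decreasingInduction with
  | self => rw [Icc_self, sum_singleton]; ring
  | of_succ l hl ih =>
    rw [← insert_Icc_add_one_left_eq_Icc hl.le, sum_insert (by simp), mul_add, ih]
    have hratio := add_add_one_mul_choose_div_choose n l
    rw [Nat.cast_sub hl.le] at hratio
    push_cast
    linear_combination hratio

theorem stmt3_general (n l : ℕ) (hln : l ≤ n) :
    ∑ k ∈ Finset.Icc l n, (k : ℝ) * (n.choose k) * 2 ^ Δ k l / ((n + k).choose k)
      = (n : ℝ) * (n.choose l) / ((n + l).choose l) := by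
  have hsum := sum_Icc_mul_two_pow_Δ_add
    (fun k => (k : ℝ) * ((n.choose k : ℝ) / (n + k).choose k)) hln
  rw [two_mul_sum_Icc_mul_choose_div_choose hln] at hsum
  have hterm : ∀ k ∈ Icc l n, (k : ℝ) * (n.choose k) * 2 ^ Δ k l / ((n + k).choose k)
      = (k : ℝ) * ((n.choose k : ℝ) / (n + k).choose k) * 2 ^ Δ k l := fun k _ => by ring
  rw [sum_congr rfl hterm, mul_div_assoc]
  linear_combination hsum

theorem stmt3 (n l : ℕ) (hn : 0 < n) (hl : 0 < l) (hln : l ≤ n) :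
    ∑ k ∈ Finset.Icc l n, (k : ℝ) * (n.choose k) * 2 ^ Δ k l / ((n + k).choose k)
      = (n : ℝ) * (n.choose l) / ((n + l).choose l) :=
  stmt3_general n l hln
end

section
/- For any positive integers n and l with l ≤ n, we have ∑_{k=l}^{n} (-1)^k · C(n,k) · 2^{Δ(k,l)}/C(n+k,k) = ((-1)^l / n) · l·C(n,l)/C(n+l,l), where Δ(a,b) = 0 if a = b and 1 otherwise. -/
/-!
The unweighted sum telescopes: with `F k = (-1)ᵏ (n+k) C(n,k) / (2n C(n+k,k))` (`tailPrimitive`),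
each term `(-1)ᵏ C(n,k) / C(n+k,k)` equals `F k - F (k+1)`, and `F (n+1) = 0`, so its tail from
`l` is `F l`. The weight `2^Δ(k,l)` doubles every term except the one at `k = l`, giving
`2 F l - (-1)ˡ C(n,l) / C(n+l,l)`, which is the right-hand side.
-/

open Finset

noncomputable def tailPrimitive (n k : ℕ) : ℝ :=
  (-1) ^ k * (n + k) * n.choose k / (2 * n * (n + k).choose k)

lemma tailPrimitive_sub_succ {n k : ℕ} (hn : 0 < n) (hk : k ≤ n) :
    tailPrimitive n k - tailPrimitive n (k + 1) = (-1) ^ k * n.choose k / (n + k).choose k := by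
  have hk1 : (k : ℝ) + 1 ≠ 0 := by positivity
  have hupper : (n.choose (k + 1) : ℝ) = n.choose k * (n - k) / (k + 1) := by
    rw [eq_div_iff hk1, ← Nat.cast_sub hk]
    exact_mod_cast Nat.choose_succ_right_eq n k
  have hlower : ((n + (k + 1)).choose (k + 1) : ℝ) = (n + k + 1) * (n + k).choose k / (k + 1) := by
    rw [eq_div_iff hk1, ← add_assoc]
    exact_mod_cast (Nat.add_one_mul_choose_eq (n + k) k).symm
  have hD : ((n + k).choose k : ℝ) ≠ 0 := by exact_mod_cast (Nat.choose_pos (by omega)).ne'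
  have hn' : (n : ℝ) ≠ 0 := by positivity
  unfold tailPrimitive
  rw [hupper, hlower]
  push_cast
  field_simp
  ring

theorem sum_Icc_neg_one_pow_mul_choose_div_choose_add {n l : ℕ} (hn : 0 < n) (hln : l ≤ n) :
    ∑ k ∈ Icc l n, (-1 : ℝ) ^ k * n.choose k / (n + k).choose k
      = (-1) ^ l * (n + l) * n.choose l / (2 * n * (n + l).choose l) := by
  have hlast : tailPrimitive n (n + 1) = 0 := by simp [tailPrimitive]
  calc ∑ k ∈ Icc l n, (-1 : ℝ) ^ k * n.choose k / (n + k).choose k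
      = -∑ k ∈ Icc l n, (tailPrimitive n (k + 1) - tailPrimitive n k) := by
        rw [← sum_neg_distrib]
        refine sum_congr rfl fun k hk => ?_
        rw [neg_sub, tailPrimitive_sub_succ hn (mem_Icc.mp hk).2]
    _ = tailPrimitive n l := by rw [sum_Icc_sub hln, hlast, zero_sub, neg_neg]

theorem stmt4_general (n l : ℕ) (hn : 0 < n) (hln : l ≤ n) :
    ∑ k ∈ Finset.Icc l n, (-1 : ℝ) ^ k * (n.choose k) * 2 ^ Δ k l / ((n + k).choose k)
      = ((-1 : ℝ) ^ l / n) * ((l : ℝ) * (n.choose l) / ((n + l).choose l)) := by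
  have two_pow_Δ : ∀ k, (2 : ℝ) ^ Δ k l = 2 - if k = l then 1 else 0 := by
    intro k
    unfold Δ
    split_ifs <;> norm_num
  simp_rw [mul_div_right_comm _ ((2 : ℝ) ^ _), two_pow_Δ, mul_sub, mul_ite, mul_one, mul_zero,
    sum_sub_distrib, ← sum_mul, sum_ite_eq', if_pos (left_mem_Icc.mpr hln),
    sum_Icc_neg_one_pow_mul_choose_div_choose_add hn hln]
  have hD : ((n + l).choose l : ℝ) ≠ 0 := by exact_mod_cast (Nat.choose_pos (by omega)).ne'
  have hn' : (n : ℝ) ≠ 0 := by positivity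
  field_simp
  ring

theorem stmt4 (n l : ℕ) (hn : 0 < n) (hl : 0 < l) (hln : l ≤ n) :
    ∑ k ∈ Finset.Icc l n, (-1 : ℝ) ^ k * (n.choose k) * 2 ^ Δ k l / ((n + k).choose k)
      = ((-1 : ℝ) ^ l / n) * ((l : ℝ) * (n.choose l) / ((n + l).choose l)) :=
  stmt4_general n l hn hln
end

section
/- For any positive integers n, l with l ≤ n and any non-negative integer c, we have ∑_{k=l}^{n} (-1)^k · C(n,k)/C(n+k,k) · S♯_{k,l}({1}^c) = ((-1)^l / n^{c+1}) · l·C(n,l)/C(n+l,l). -/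
noncomputable def Hstar : ℕ → List ℕ → ℝ
  | _, [] => 1
  | n, s :: rest => ∑ k ∈ Finset.Icc 1 n, (1 / (k : ℝ) ^ s) * Hstar k rest

noncomputable def zetaStar : List ℕ → ℝ
  | [] => 1
  | s :: rest => ∑' k : ℕ+, (1 / (k : ℝ) ^ s) * Hstar k rest

noncomputable def Ssharp (k l : ℕ) : ℕ → ℝ
  | 0 => 2 ^ Δ k l
  | c + 1 => ∑ j ∈ Finset.Icc l k, (2 ^ Δ k j / (j : ℝ)) * Ssharp j l c

/-! Put `w k = (-1)^k C(n,k) / C(n+k,k)`. Since `w (k+1) / w k = -(n-k)/(n+k+1)`, the tail sums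
telescope to `∑_{k=l}^n w k = (n+l)/(2n) · w l`, hence `∑_{k=j}^n 2^Δ(k,j) w k = (j/n) · w j`.
Expanding `S♯_{k,l}({1}^{c+1})` along its first index and swapping the two sums, this shows that
each further `1` multiplies `∑_k w k S♯_{k,l}({1}^c)` by `1/n`. -/

open Finset

noncomputable def altWeight (n k : ℕ) : ℝ := (-1) ^ k * n.choose k / (n + k).choose k

lemma altWeight_succ {n k : ℕ} (hk : k ≤ n) :
    (n + k + 1 : ℝ) * altWeight n (k + 1) = -((n - k : ℝ) * altWeight n k) := by
  have hB : ((n + k).choose k : ℝ) ≠ 0 := by exact_mod_cast (Nat.choose_pos (by omega)).ne'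
  have top : (n.choose (k + 1) : ℝ) = n.choose k * (n - k) / (k + 1) := by
    rw [eq_div_iff (by positivity), ← Nat.cast_sub hk]
    exact_mod_cast Nat.choose_succ_right_eq n k
  have bot : ((n + k + 1).choose (k + 1) : ℝ) = (n + k + 1) * (n + k).choose k / (k + 1) := by
    rw [eq_div_iff (by positivity)]
    exact_mod_cast (Nat.add_one_mul_choose_eq (n + k) k).symm
  unfold altWeight
  rw [show n + (k + 1) = n + k + 1 by ring, top, bot]
  field_simp
  ring

lemma sum_Icc_altWeight {n l : ℕ} (hn : 0 < n) (hl : l ≤ n) :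
    ∑ k ∈ Icc l n, altWeight n k = altWeight n l * (n + l) / (2 * n) := by
  set T : ℕ → ℝ := fun k ↦ altWeight n k * (n + k) / (2 * n)
  have hn' : (n : ℝ) ≠ 0 := by exact_mod_cast hn.ne'
  have telescope : ∀ k ∈ Icc l n, altWeight n k = -(T (k + 1) - T k) := by
    intro k hk
    have ratio := altWeight_succ (mem_Icc.1 hk).2
    simp only [T]
    push_cast
    field_simp
    linear_combination ratio
  have vanish : T (n + 1) = 0 := by simp [T, altWeight]
  rw [sum_congr rfl telescope, sum_neg_distrib, sum_Icc_sub hl, vanish, zero_sub, neg_neg]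

lemma sum_Icc_mul_two_pow_Δ (f : ℕ → ℝ) {j n : ℕ} (hj : j ≤ n) :
    ∑ k ∈ Icc j n, f k * 2 ^ Δ k j = 2 * ∑ k ∈ Icc j n, f k - f j := by
  have split : ∀ k ∈ Icc j n, f k * 2 ^ Δ k j = 2 * f k - if k = j then f k else 0 := by
    intro k _
    by_cases h : k = j <;> simp only [Δ, h, if_true, if_false, pow_zero, pow_one] <;> ring
  rw [sum_congr rfl split, sum_sub_distrib, ← mul_sum, sum_ite_eq' _ j,
    if_pos (mem_Icc.2 ⟨le_rfl, hj⟩)]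

lemma sum_Icc_altWeight_mul_two_pow_Δ {n j : ℕ} (hn : 0 < n) (hj : j ≤ n) :
    ∑ k ∈ Icc j n, altWeight n k * 2 ^ Δ k j = j / n * altWeight n j := by
  have hn' : (n : ℝ) ≠ 0 := by exact_mod_cast hn.ne'
  rw [sum_Icc_mul_two_pow_Δ _ hj, sum_Icc_altWeight hn hj]
  field_simp
  ring

lemma sum_altWeight_mul_Ssharp_succ {n l : ℕ} (hl : 0 < l) (c : ℕ) :
    ∑ k ∈ Icc l n, altWeight n k * Ssharp k l (c + 1)
      = (∑ k ∈ Icc l n, altWeight n k * Ssharp k l c) / n := by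
  calc ∑ k ∈ Icc l n, altWeight n k * Ssharp k l (c + 1)
      = ∑ k ∈ Icc l n, ∑ j ∈ Icc l k, altWeight n k * 2 ^ Δ k j * (Ssharp j l c / j) := by
        refine sum_congr rfl fun k _ ↦ ?_
        rw [Ssharp, mul_sum]
        exact sum_congr rfl fun j _ ↦ by ring
    _ = ∑ j ∈ Icc l n, (∑ k ∈ Icc j n, altWeight n k * 2 ^ Δ k j) * (Ssharp j l c / j) := by
        rw [sum_comm' (t' := Icc l n) (s' := fun j ↦ Icc j n)]
        · simp only [sum_mul]
        · intro k j
          simp only [mem_Icc]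
          omega
    _ = ∑ j ∈ Icc l n, altWeight n j * Ssharp j l c / n := by
        refine sum_congr rfl fun j hj ↦ ?_
        obtain ⟨hlj, hjn⟩ := mem_Icc.1 hj
        have hj' : (j : ℝ) ≠ 0 := by exact_mod_cast (hl.trans_le hlj).ne'
        rw [sum_Icc_altWeight_mul_two_pow_Δ (hl.trans_le (hlj.trans hjn)) hjn]
        field_simp
    _ = (∑ k ∈ Icc l n, altWeight n k * Ssharp k l c) / n := by rw [sum_div]

lemma sum_altWeight_mul_Ssharp {n l : ℕ} (hn : 0 < n) (hl : 0 < l) (hln : l ≤ n) (c : ℕ) :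
    ∑ k ∈ Icc l n, altWeight n k * Ssharp k l c = l / n * altWeight n l / n ^ c := by
  induction c with
  | zero => simpa [Ssharp] using sum_Icc_altWeight_mul_two_pow_Δ hn hln
  | succ c ih => rw [sum_altWeight_mul_Ssharp_succ hl, ih, pow_succ, div_div]

theorem stmt5 (n l c : ℕ) (hn : 0 < n) (hl : 0 < l) (hln : l ≤ n) :
    ∑ k ∈ Finset.Icc l n,
        (-1 : ℝ) ^ k * (n.choose k) / ((n + k).choose k) * Ssharp k l c
      = ((-1 : ℝ) ^ l / (n : ℝ) ^ (c + 1)) * ((l : ℝ) * (n.choose l) / ((n + l).choose l)) := by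
  have closed_form := sum_altWeight_mul_Ssharp hn hl hln c
  simp only [altWeight] at closed_form
  rw [closed_form]
  ring
end

section
/- Let M > 0, c, a be real numbers with a > 1, and let (R_k) be a sequence of real numbers satisfying |R_k| < M·(log k + 1)^c / k^a for all k ≥ 1. Then lim_{n→∞} ∑_{k=1}^{n} |R_k| · (1 - C(n,k)/C(n+k,k)) = 0. -/
/-!
By Tannery's theorem (dominated convergence for series) it suffices that each weight
`1 - C(n,k)/C(n+k,k)` lies in `[0, 1]` and tends to `0` as `n → ∞`, and that `∑ |R k|` converges.
The weights tend to `0` because both binomial coefficients are asymptotic to `n^k / k!`; the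
series converges because `(log k + 1)^c / k^a = O(k^(-(a+1)/2))`.
-/

open Filter Finset Asymptotics Real Topology

theorem isLittleO_log_add_one_rpow_rpow_atTop (r : ℝ) {s : ℝ} (hs : 0 < s) :
    (fun x : ℝ => (log x + 1) ^ r) =o[atTop] fun x => x ^ s := by
  -- `log x + 1 = log (e * x)`
  have h := (isLittleO_log_rpow_rpow_atTop r hs).comp_tendsto
    (tendsto_id.const_mul_atTop (exp_pos 1))
  refine (h.congr' ?_ ?_).trans_isBigO (isBigO_const_mul_self (exp 1 ^ s) _ _)
  · filter_upwards [eventually_gt_atTop 0] with x hx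
    simp [log_mul (exp_pos 1).ne' hx.ne', add_comm]
  · filter_upwards [eventually_ge_atTop 0] with x hx
    simp [mul_rpow (exp_pos 1).le hx]

theorem summable_log_add_one_rpow_div_rpow (c : ℝ) {a : ℝ} (ha : 1 < a) :
    Summable fun k : ℕ => (log k + 1) ^ c / (k : ℝ) ^ a := by
  refine summable_of_isBigO_nat (summable_nat_rpow.2 (by linarith : -((a + 1) / 2) < -1)) ?_
  have hlog := (isLittleO_log_add_one_rpow_rpow_atTop c (by linarith : 0 < (a - 1) / 2)).isBigO
  have h := (hlog.comp_tendsto tendsto_natCast_atTop_atTop).mul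
    (isBigO_refl (fun k : ℕ => ((k : ℝ) ^ a)⁻¹) atTop)
  refine h.congr' (Eventually.of_forall fun k => rfl) ?_
  filter_upwards [eventually_gt_atTop 0] with k hk
  have hk : (0 : ℝ) < k := by exact_mod_cast hk
  simp only [Function.comp_apply, ← rpow_neg hk.le, ← rpow_add hk]
  ring_nf

theorem isEquivalent_choose_add (j k : ℕ) :
    (fun n : ℕ => ((n + j).choose k : ℝ)) ~[atTop] fun n => (n.choose k : ℝ) := by
  have hadd : (fun n : ℕ => ((n + j : ℕ) : ℝ)) ~[atTop] fun n => (n : ℝ) := by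
    push_cast
    exact IsEquivalent.refl.add_isLittleO
      (isLittleO_const_left.2 (Or.inr (tendsto_norm_atTop_atTop.comp tendsto_natCast_atTop_atTop)))
  refine ((isEquivalent_choose k).comp_tendsto (tendsto_add_atTop_nat j)).trans ?_
  exact ((hadd.pow k).div IsEquivalent.refl).trans (isEquivalent_choose k).symm

theorem tendsto_choose_div_choose_add (k : ℕ) :
    Tendsto (fun n : ℕ => (n.choose k : ℝ) / (n + k).choose k) atTop (𝓝 1) := by
  refine (isEquivalent_iff_tendsto_one (Eventually.of_forall fun n => ?_)).1
    (isEquivalent_choose_add k k).symm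
  exact_mod_cast (Nat.choose_pos (Nat.le_add_left k n)).ne'

theorem choose_div_choose_add_mem_Icc (n j k : ℕ) :
    (n.choose k : ℝ) / (n + j).choose k ∈ Set.Icc 0 1 :=
  ⟨by positivity,
    div_le_one_of_le₀ (mod_cast Nat.choose_le_choose k (Nat.le_add_right n j)) (Nat.cast_nonneg _)⟩

theorem tendsto_sum_mul_of_summable_norm {α ι R : Type*} [NormedRing R] [CompleteSpace R]
    {l : Filter α} {b : ι → R} (hb : Summable fun k => ‖b k‖) {w : α → ι → R}
    (hw : ∀ n k, ‖w n k‖ ≤ 1) (hw0 : ∀ k, Tendsto (w · k) l (𝓝 0)) (s : α → Finset ι) :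
    Tendsto (fun n => ∑ k ∈ s n, b k * w n k) l (𝓝 0) := by
  set f : α → ι → R := fun n => (s n : Set ι).indicator fun k => b k * w n k
  have hf : ∀ n k, ‖f n k‖ ≤ ‖b k‖ * ‖w n k‖ := fun n k =>
    (norm_indicator_le_norm_self _ _).trans (norm_mul_le _ _)
  have hlim : ∀ k, Tendsto (f · k) l (𝓝 0) := fun k =>
    squeeze_zero_norm (hf · k) (by simpa using ((hw0 k).norm.const_mul ‖b k‖))
  have H := tendsto_tsum_of_dominated_convergence hb hlim
    (Eventually.of_forall fun n k => (hf n k).trans (mul_le_of_le_one_right (norm_nonneg _) (hw n k)))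
  rw [tsum_zero] at H
  refine H.congr fun n => ?_
  rw [tsum_eq_sum (s := s n) fun k hk => Set.indicator_of_notMem (by simpa using hk) _]
  exact sum_congr rfl fun k hk => Set.indicator_of_mem (by simpa using hk) _

theorem stmt6_general (M c a : ℝ) (ha : 1 < a) (R : ℕ → ℝ)
    (hR : ∀ k : ℕ, 1 ≤ k → |R k| < M * (Real.log k + 1) ^ c / (k : ℝ) ^ a) :
    Filter.Tendsto
      (fun n : ℕ => ∑ k ∈ Finset.Icc 1 n,
        |R k| * (1 - (n.choose k : ℝ) / ((n + k).choose k)))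
      Filter.atTop (nhds 0) := by
  have hsum : Summable fun k => ‖|R k|‖ := by
    refine ((summable_log_add_one_rpow_div_rpow c ha).mul_left M).of_norm_bounded_eventually_nat ?_
    filter_upwards [eventually_ge_atTop 1] with k hk
    simpa [mul_div_assoc] using (hR k hk).le
  refine tendsto_sum_mul_of_summable_norm hsum (fun n k => ?_) (fun k => ?_) (Icc 1)
  · obtain ⟨h0, h1⟩ := choose_div_choose_add_mem_Icc n k k
    exact abs_sub_le_of_nonneg_of_le zero_le_one le_rfl h0 h1
  · simpa using (tendsto_choose_div_choose_add k).const_sub 1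

theorem stmt6 (M c a : ℝ) (hM : 0 < M) (ha : 1 < a) (R : ℕ → ℝ)
    (hR : ∀ k : ℕ, 1 ≤ k → |R k| < M * (Real.log k + 1) ^ c / (k : ℝ) ^ a) :
    Filter.Tendsto
      (fun n : ℕ => ∑ k ∈ Finset.Icc 1 n,
        |R k| * (1 - (n.choose k : ℝ) / ((n + k).choose k)))
      Filter.atTop (nhds 0) :=
  stmt6_general M c a ha R hR
end

section
/- For every positive integer n and every complex number z with |z| < 1, the generating function of the multiple harmonic star sums H_n^⋆({2}^a) satisfies ∑_{a≥0} H_n^⋆({2}^a) z^{2a} = -2 ∑_{k=1}^{n} (C(n,k)/C(n+k,k)) · (-1)^k k² / (k² - z²). -/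
open Finset

lemma Hstar_succ_cons (n s : ℕ) (l : List ℕ) :
    Hstar (n + 1) (s :: l) = Hstar n (s :: l) + 1 / ((n : ℝ) + 1) ^ s * Hstar (n + 1) l := by
  rw [Hstar, Hstar, sum_Icc_succ_top (by omega)]
  push_cast
  rfl

lemma Hstar_succ_replicate (n s a : ℕ) :
    Hstar (n + 1) (List.replicate a s) =
      ∑ p ∈ antidiagonal a, Hstar n (List.replicate p.1 s) * (1 / ((n : ℝ) + 1) ^ s) ^ p.2 := by
  induction a with
  | zero => simp [Hstar]
  | succ a ih =>
    rw [List.replicate_succ, Hstar_succ_cons, ih, Nat.sum_antidiagonal_succ', List.replicate_succ,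
      mul_sum]
    simp only [pow_zero, mul_one, pow_succ]
    congr 1
    exact sum_congr rfl fun p _ => by ring

section GeneratingFunction

variable {z : ℂ}

lemma Hstar_zero_replicate_two_mul_pow (a : ℕ) :
    (Hstar 0 (List.replicate a 2) : ℂ) * z ^ (2 * a) = if a = 0 then 1 else 0 := by
  cases a <;> simp [Hstar, List.replicate_succ]

lemma Hstar_succ_replicate_two_mul_pow (n a : ℕ) :
    (Hstar (n + 1) (List.replicate a 2) : ℂ) * z ^ (2 * a) =
      ∑ p ∈ antidiagonal a, (Hstar n (List.replicate p.1 2) : ℂ) * z ^ (2 * p.1) *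
        (z ^ 2 / ((n : ℂ) + 1) ^ 2) ^ p.2 := by
  rw [Hstar_succ_replicate, Complex.ofReal_sum, sum_mul]
  refine sum_congr rfl fun p hp => ?_
  rw [← mem_antidiagonal.mp hp]
  push_cast
  ring

lemma natCast_sq_ne_sq (hz : ‖z‖ < 1) {k : ℕ} (hk : 1 ≤ k) : (k : ℂ) ^ 2 ≠ z ^ 2 := by
  intro h
  have h' := congrArg norm h
  rw [norm_pow, norm_pow, Complex.norm_natCast] at h'
  have : (1 : ℝ) ≤ k := by exact_mod_cast hk
  nlinarith [norm_nonneg z]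

lemma norm_sq_div_succ_sq_lt_one (hz : ‖z‖ < 1) (n : ℕ) : ‖z ^ 2 / ((n : ℂ) + 1) ^ 2‖ < 1 := by
  have hn : ‖(n : ℂ) + 1‖ = n + 1 := by exact_mod_cast Complex.norm_natCast (n + 1)
  have h1 : (1 : ℝ) ≤ ((n : ℝ) + 1) ^ 2 := one_le_pow₀ (by linarith [n.cast_nonneg (α := ℝ)])
  rw [norm_div, norm_pow, norm_pow, hn, div_lt_one (by positivity)]
  nlinarith [norm_nonneg z]

lemma summable_norm_Hstar_replicate_two_mul_pow (hz : ‖z‖ < 1) (n : ℕ) :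
    Summable fun a => ‖(Hstar n (List.replicate a 2) : ℂ) * z ^ (2 * a)‖ := by
  induction n with
  | zero =>
    simp_rw [Hstar_zero_replicate_two_mul_pow]
    exact summable_of_ne_finset_zero (s := {0}) fun a ha => by
      rw [if_neg (by simpa using ha), norm_zero]
  | succ n ih =>
    simp_rw [Hstar_succ_replicate_two_mul_pow]
    exact summable_norm_sum_mul_antidiagonal_of_summable_norm
      (f := fun a => (Hstar n (List.replicate a 2) : ℂ) * z ^ (2 * a))
      (g := fun j => (z ^ 2 / ((n : ℂ) + 1) ^ 2) ^ j) ih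
      (summable_norm_geometric_of_norm_lt_one (norm_sq_div_succ_sq_lt_one hz n))

theorem hasSum_Hstar_replicate_two_mul_pow (hz : ‖z‖ < 1) (n : ℕ) :
    HasSum (fun a => (Hstar n (List.replicate a 2) : ℂ) * z ^ (2 * a))
      (∏ k ∈ Icc 1 n, (k : ℂ) ^ 2 / ((k : ℂ) ^ 2 - z ^ 2)) := by
  refine (summable_norm_Hstar_replicate_two_mul_pow hz n).of_norm.hasSum_iff.mpr ?_
  induction n with
  | zero =>
    simp_rw [Hstar_zero_replicate_two_mul_pow]
    simp
  | succ n ih =>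
    have hq := norm_sq_div_succ_sq_lt_one hz n
    simp_rw [Hstar_succ_replicate_two_mul_pow]
    rw [← tsum_mul_tsum_eq_tsum_sum_antidiagonal_of_summable_norm
      (summable_norm_Hstar_replicate_two_mul_pow hz n) (summable_norm_geometric_of_norm_lt_one hq),
      ih, tsum_geometric_of_norm_lt_one hq, prod_Icc_succ_top (by omega)]
    have hsub := sub_ne_zero.mpr (natCast_sq_ne_sq hz (k := n + 1) (by omega))
    have hsucc : ((n : ℂ) + 1) ^ 2 ≠ 0 := pow_ne_zero 2 (Nat.cast_add_one_ne_zero n)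
    push_cast at hsub ⊢
    field_simp

end GeneratingFunction

lemma neg_one_pow_sub_of_le {M : Type*} [Monoid M] [HasDistribNeg M] {k n : ℕ} (h : k ≤ n) :
    (-1 : M) ^ (n - k) = (-1) ^ n * (-1) ^ k := by
  obtain ⟨m, rfl⟩ := Nat.exists_eq_add_of_le h
  rw [Nat.add_sub_cancel_left, pow_add, ← pow_add, add_comm, pow_add, mul_assoc, ← pow_add,
    ← two_mul, pow_mul]
  simp

lemma Nat.centralBinom_mul_choose (n k : ℕ) (hk : k ≤ n) :
    n.centralBinom * n.choose k = (2 * n).choose (n - k) * (n + k).choose k := by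
  rw [Nat.centralBinom_eq_two_mul_choose, Nat.choose_mul hk,
    Nat.choose_symm_of_eq_add (show 2 * n = (n - k) + (n + k) by omega), Nat.choose_mul (by omega),
    Nat.choose_symm_of_eq_add (show 2 * n - k = (n - k) + n by omega)]
  congr 2
  omega

lemma sum_neg_one_pow_mul_choose_mul_add_pow {R : Type*} [CommRing R] {d n : ℕ} (h : d < n)
    (x : R) : ∑ j ∈ range (n + 1), (-1) ^ (n - j) * n.choose j * (x + j) ^ d = 0 := by
  rw [← Pi.zero_apply (M := fun _ : R => R) x, ← fwdDiff_iter_pow_eq_zero_of_lt h,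
    fwdDiff_iter_eq_sum_shift]
  refine sum_congr rfl fun j _ => ?_
  simp [zsmul_eq_mul]

/-- `∑_{j=0}^{2n} (-1)^j (j - n)² C(2n, j)` vanishes; the substitution `j = n ∓ k` splits it into
two copies of `(-1)^n` times this sum. -/
lemma sum_Icc_neg_one_pow_mul_sq_mul_choose_two_mul {n : ℕ} (hn : 2 ≤ n) :
    ∑ k ∈ Icc 1 n, (-1 : ℤ) ^ k * k ^ 2 * (2 * n).choose (n - k) = 0 := by
  set g : ℕ → ℤ := fun k => (-1) ^ k * k ^ 2 * (2 * n).choose (n - k)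
  set f : ℕ → ℤ := fun j => (-1) ^ (2 * n - j) * (2 * n).choose j * (-n + j) ^ 2
  have hf : ∑ j ∈ range (2 * n + 1), f j = 0 :=
    sum_neg_one_pow_mul_choose_mul_add_pow (by omega) _
  have hlow (i : ℕ) (hi : i < n) : f (n - (i + 1)) = (-1) ^ n * g (i + 1) := by
    simp only [f, g]
    rw [show 2 * n - (n - (i + 1)) = n + (i + 1) by omega, pow_add, Nat.cast_sub (by omega)]
    push_cast
    ring
  have hhigh (i : ℕ) (hi : i < n) : f (n + 1 + i) = (-1) ^ n * g (i + 1) := by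
    simp only [f, g]
    rw [show 2 * n - (n + 1 + i) = n - (i + 1) by omega, neg_one_pow_sub_of_le (by omega),
      Nat.choose_symm_of_eq_add (show 2 * n = (n + 1 + i) + (n - (i + 1)) by omega)]
    push_cast
    ring
  rw [show 2 * n + 1 = (n + 1) + n by omega, sum_range_add, ← sum_range_reflect,
    sum_range_succ'] at hf
  simp only [add_tsub_cancel_right] at hf
  rw [sum_congr rfl fun i hi => hlow i (mem_range.mp hi),
    sum_congr rfl fun i hi => hhigh i (mem_range.mp hi), show f (n - 0) = 0 by simp [f], add_zero,
    ← two_mul, ← mul_sum, ← mul_assoc] at hf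
  rw [← Ico_add_one_right_eq_Icc, sum_Ico_eq_sum_range, Nat.add_sub_cancel]
  simp_rw [add_comm 1]
  exact (mul_eq_zero.mp hf).resolve_left (mul_ne_zero two_ne_zero (pow_ne_zero _ (by norm_num)))

section PartialFractions

variable {K : Type*} [Field K] [CharZero K]

lemma sum_neg_one_pow_mul_sq_mul_choose_div_choose {n : ℕ} (hn : 2 ≤ n) :
    ∑ k ∈ Icc 1 n, (-1 : K) ^ k * k ^ 2 * ((n.choose k : K) / (n + k).choose k) = 0 := by
  have hc : (n.centralBinom : K) ≠ 0 := by exact_mod_cast n.centralBinom_ne_zero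
  have h := congrArg (Int.cast : ℤ → K) (sum_Icc_neg_one_pow_mul_sq_mul_choose_two_mul hn)
  push_cast at h
  rw [← mul_right_inj' hc, mul_zero, ← h, mul_sum]
  refine sum_congr rfl fun k hk => ?_
  have hk := (mem_Icc.mp hk).2
  have hck : ((n + k).choose k : K) ≠ 0 := by exact_mod_cast (Nat.choose_pos (by omega)).ne'
  have h' := congrArg (Nat.cast : ℕ → K) (Nat.centralBinom_mul_choose n k hk)
  push_cast at h'
  have hratio : (n.centralBinom : K) * (n.choose k / (n + k).choose k) = (2 * n).choose (n - k) := by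
    rw [mul_div_assoc', h', mul_div_cancel_right₀ _ hck]
  linear_combination ((-1) ^ k * (k : K) ^ 2) * hratio

lemma choose_succ_div_choose_mul {n k : ℕ} (hk : k ≤ n) :
    ((n + 1).choose k : K) / (n + 1 + k).choose k * (((n : K) + 1) ^ 2 - k ^ 2) =
      ((n : K) + 1) ^ 2 * ((n.choose k : K) / (n + k).choose k) := by
  have h₁ := congrArg (Nat.cast : ℕ → K) (Nat.choose_mul_succ_eq n k)
  have h₂ := congrArg (Nat.cast : ℕ → K) (Nat.choose_mul_succ_eq (n + k) k)
  rw [show n + k + 1 - k = n + 1 by omega, show n + k + 1 = n + 1 + k by omega] at h₂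
  push_cast [Nat.cast_sub (show k ≤ n + 1 by omega)] at h₁ h₂
  have hc₁ : ((n + k).choose k : K) ≠ 0 := by exact_mod_cast (Nat.choose_pos (by omega)).ne'
  have hc₂ : ((n + 1 + k).choose k : K) ≠ 0 := by exact_mod_cast (Nat.choose_pos (by omega)).ne'
  have hn : (n : K) + 1 ≠ 0 := Nat.cast_add_one_ne_zero n
  field_simp
  linear_combination (-((n : K) + 1 + k) * ((n + k).choose k : K)) * h₁ +
    ((n : K) + 1) * (n.choose k : K) * h₂

lemma partial_fraction_sum_succ_mul {n : ℕ} (hn : 1 ≤ n) {w : K}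
    (hw : ∀ k ∈ Icc 1 (n + 1), (k : K) ^ 2 ≠ w) :
    (∑ k ∈ Icc 1 (n + 1), ((n + 1).choose k : K) / (n + 1 + k).choose k *
        ((-1) ^ k * k ^ 2 / (k ^ 2 - w))) * (((n : K) + 1) ^ 2 - w) =
      ((n : K) + 1) ^ 2 * ∑ k ∈ Icc 1 n, (n.choose k : K) / (n + k).choose k *
        ((-1) ^ k * k ^ 2 / (k ^ 2 - w)) := by
  have hsplit : ∀ k ∈ Icc 1 (n + 1),
      ((n + 1).choose k : K) / (n + 1 + k).choose k * ((-1) ^ k * k ^ 2 / (k ^ 2 - w)) *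
          (((n : K) + 1) ^ 2 - w) =
        (-1) ^ k * k ^ 2 * (((n + 1).choose k : K) / (n + 1 + k).choose k) +
          ((n + 1).choose k : K) / (n + 1 + k).choose k * (((n : K) + 1) ^ 2 - k ^ 2) *
            ((-1) ^ k * k ^ 2 / (k ^ 2 - w)) := by
    intro k hk
    have := sub_ne_zero.mpr (hw k hk)
    field_simp
    ring
  rw [sum_mul, sum_congr rfl hsplit, sum_add_distrib,
    sum_neg_one_pow_mul_sq_mul_choose_div_choose (by omega), zero_add,
    sum_Icc_succ_top (by omega), mul_sum]
  push_cast
  rw [sub_self, mul_zero, zero_mul, add_zero]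
  refine sum_congr rfl fun k hk => ?_
  rw [choose_succ_div_choose_mul (mem_Icc.mp hk).2, mul_assoc]

theorem prod_sq_div_sq_sub_eq_sum {n : ℕ} (hn : 1 ≤ n) {w : K}
    (hw : ∀ k ∈ Icc 1 n, (k : K) ^ 2 ≠ w) :
    ∏ k ∈ Icc 1 n, (k : K) ^ 2 / (k ^ 2 - w) =
      -2 * ∑ k ∈ Icc 1 n, (n.choose k : K) / (n + k).choose k * ((-1) ^ k * k ^ 2 / (k ^ 2 - w)) := by
  induction n, hn using Nat.le_induction with
  | base =>
    have := sub_ne_zero.mpr (hw 1 (by simp))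
    rw [Icc_self, prod_singleton, sum_singleton]
    field_simp
    norm_num
  | succ n hn ih =>
    have hw' : ∀ k ∈ Icc 1 n, (k : K) ^ 2 ≠ w := fun k hk =>
      hw k (Icc_subset_Icc_right (by omega) hk)
    have hsub := sub_ne_zero.mpr (hw (n + 1) (by simp))
    push_cast at hsub
    rw [prod_Icc_succ_top (by omega), ih hw', mul_div_assoc', div_eq_iff (by push_cast; exact hsub)]
    push_cast
    linear_combination 2 * partial_fraction_sum_succ_mul hn hw

end PartialFractions

theorem stmt7 (n : ℕ) (hn : 0 < n) (z : ℂ) (hz : ‖z‖ < 1) :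
    ∑' a : ℕ, (Hstar n (List.replicate a 2) : ℂ) * z ^ (2 * a)
      = -2 * ∑ k ∈ Finset.Icc 1 n,
          ((n.choose k : ℂ) / ((n + k).choose k)) *
            ((-1 : ℂ) ^ k * (k : ℂ) ^ 2 / ((k : ℂ) ^ 2 - z ^ 2)) := by
  rw [(hasSum_Hstar_replicate_two_mul_pow hz n).tsum_eq]
  exact prod_sq_div_sq_sub_eq_sum hn fun k hk => natCast_sq_ne_sq hz (mem_Icc.mp hk).1
end

section
/- For every complex number z with |z| < 1, the generating function of the multiple zeta star values ζ^⋆({2}^a) satisfies ∑_{a≥0} ζ^⋆({2}^a) z^{2a} = 1 - 2z² ∑_{k=1}^{∞} (-1)^k/(k² - z²). -/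
/-!
Let `ζ⋆_N({2}^a)` be the truncation of `ζ⋆({2}^a)` to `k₁ ≤ N`. Peeling off the terms with
`k₁ = N + 1` gives `ζ⋆_{N+1}({2}^{a+1}) = ζ⋆_N({2}^{a+1}) + ζ⋆_{N+1}({2}^a) / (N+1)²`, hence
`∑ₐ ζ⋆_N({2}^a) wᵃ = ∏_{k ≤ N} (1 - w/k²)⁻¹`. Since `ζ⋆_N({2}^a) ≤ 2`, dominated convergence lets
`N → ∞` pass through the sum, and Euler's sine product turns the left side into `πz / sin πz`
for `w = z²`. The right side is the same function: it is the partial fraction expansion of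
`π / sin πz`, obtained from that of the cotangent through `1 / sin x = cot (x/2) - cot x`.
-/

open Finset Filter Topology Real Complex

noncomputable def zetaStarTwoTrunc (a N : ℕ) : ℝ := Hstar N (List.replicate a 2)

lemma sum_Icc_two_div_mul_succ (N : ℕ) :
    ∑ k ∈ Icc 1 N, 2 / ((k : ℝ) * (k + 1)) = 2 - 2 / ((N : ℝ) + 1) := by
  induction N with
  | zero => simp
  | succ N ih =>
    rw [sum_Icc_succ_top (by omega), ih]
    push_cast
    field_simp
    ring

namespace zetaStarTwoTrunc

lemma zero_left (N : ℕ) : zetaStarTwoTrunc 0 N = 1 := rfl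

lemma succ_left (a N : ℕ) :
    zetaStarTwoTrunc (a + 1) N = ∑ k ∈ Icc 1 N, 1 / (k : ℝ) ^ 2 * zetaStarTwoTrunc a k := rfl

lemma succ_zero (a : ℕ) : zetaStarTwoTrunc (a + 1) 0 = 0 := by
  simp [succ_left]

lemma succ_succ (a N : ℕ) :
    zetaStarTwoTrunc (a + 1) (N + 1) =
      zetaStarTwoTrunc (a + 1) N + zetaStarTwoTrunc a (N + 1) / ((N : ℝ) + 1) ^ 2 := by
  rw [succ_left, succ_left, sum_Icc_succ_top (by omega)]
  push_cast
  ring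

lemma nonneg (a N : ℕ) : 0 ≤ zetaStarTwoTrunc a N := by
  induction a generalizing N with
  | zero => simp [zero_left]
  | succ a ih => rw [succ_left]; exact sum_nonneg fun k _ ↦ mul_nonneg (by positivity) (ih k)

-- the sharper bound `2 - 2 / (N + 1)` is what makes the induction on `a` close
lemma le_two_sub {N : ℕ} (hN : 1 ≤ N) (a : ℕ) :
    zetaStarTwoTrunc a N ≤ 2 - 2 / ((N : ℝ) + 1) := by
  induction a generalizing N with
  | zero =>
    have : (1 : ℝ) ≤ N := by exact_mod_cast hN
    rw [zero_left, le_sub_comm, div_le_iff₀ (by positivity)]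
    linarith
  | succ a ih =>
    rw [succ_left, ← sum_Icc_two_div_mul_succ]
    refine sum_le_sum fun k hk ↦ ?_
    have hk0 : (k : ℝ) ≠ 0 := by have := (mem_Icc.mp hk).1; positivity
    calc 1 / (k : ℝ) ^ 2 * zetaStarTwoTrunc a k ≤ 1 / (k : ℝ) ^ 2 * (2 - 2 / ((k : ℝ) + 1)) :=
          mul_le_mul_of_nonneg_left (ih (mem_Icc.mp hk).1) (by positivity)
      _ = 2 / ((k : ℝ) * (k + 1)) := by
          field_simp
          ring

lemma le_two (a N : ℕ) : zetaStarTwoTrunc a N ≤ 2 := by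
  rcases N.eq_zero_or_pos with rfl | hN
  · cases a with
    | zero => norm_num [zero_left]
    | succ a => norm_num [succ_zero]
  · linarith [le_two_sub hN a, (by positivity : (0 : ℝ) ≤ 2 / ((N : ℝ) + 1))]

lemma tendsto_zetaStar (a : ℕ) :
    Tendsto (zetaStarTwoTrunc a) atTop (𝓝 (zetaStar (List.replicate a 2))) := by
  cases a with
  | zero => exact tendsto_const_nhds
  | succ a =>
    set g : ℕ → ℝ := fun n ↦ zetaStarTwoTrunc a (n + 1) / ((n : ℝ) + 1) ^ 2
    have hpartial (N : ℕ) : ∑ n ∈ range N, g n = zetaStarTwoTrunc (a + 1) N := by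
      induction N with
      | zero => rw [sum_range_zero, succ_zero]
      | succ N ih => rw [sum_range_succ, ih, succ_succ]
    have hg : Summable g :=
      summable_of_sum_range_le (fun n ↦ div_nonneg (nonneg a _) (by positivity))
        fun N ↦ (hpartial N).trans_le (le_two _ _)
    have hzeta : zetaStar (List.replicate (a + 1) 2) = ∑' n, g n := by
      rw [List.replicate_succ, zetaStar,
        tsum_pnat_eq_tsum_succ (f := fun k ↦ 1 / (k : ℝ) ^ 2 * Hstar k (List.replicate a 2))]
      refine tsum_congr fun n ↦ ?_
      push_cast
      exact one_div_mul_eq_div _ _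
    rw [hzeta]
    simpa only [hpartial] using hg.hasSum.tendsto_sum_nat

variable {w : ℂ}

lemma norm_mul_pow_le (a N : ℕ) : ‖(zetaStarTwoTrunc a N : ℂ) * w ^ a‖ ≤ 2 * ‖w‖ ^ a := by
  rw [norm_mul, norm_pow, Complex.norm_real, Real.norm_of_nonneg (nonneg a N)]
  gcongr
  exact le_two a N

lemma summable_mul_pow (hw : ‖w‖ < 1) (N : ℕ) :
    Summable fun a ↦ (zetaStarTwoTrunc a N : ℂ) * w ^ a :=
  .of_norm_bounded ((summable_geometric_of_lt_one (norm_nonneg w) hw).mul_left 2)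
    (norm_mul_pow_le · N)

lemma tsum_mul_pow_succ_sub (hw : ‖w‖ < 1) (N : ℕ) :
    ∑' a, (zetaStarTwoTrunc a (N + 1) : ℂ) * w ^ a - ∑' a, (zetaStarTwoTrunc a N : ℂ) * w ^ a =
      w / ((N : ℂ) + 1) ^ 2 * ∑' a, (zetaStarTwoTrunc a (N + 1) : ℂ) * w ^ a := by
  have hs := (summable_mul_pow hw (N + 1)).sub (summable_mul_pow hw N)
  rw [← (summable_mul_pow hw _).tsum_sub (summable_mul_pow hw _), hs.tsum_eq_zero_add,
    ← tsum_mul_left]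
  simp only [zero_left, sub_self, zero_add, succ_succ]
  refine tsum_congr fun a ↦ ?_
  push_cast
  ring

lemma tsum_mul_pow_eq_prod (hw : ‖w‖ < 1) (N : ℕ) :
    ∑' a, (zetaStarTwoTrunc a N : ℂ) * w ^ a = ∏ i ∈ range N, (1 - w / ((i : ℂ) + 1) ^ 2)⁻¹ := by
  induction N with
  | zero =>
    rw [prod_range_zero, tsum_eq_single 0 fun a ha ↦ ?_]
    · simp [zero_left]
    · obtain ⟨a, rfl⟩ := Nat.exists_eq_succ_of_ne_zero ha
      simp [succ_zero]
  | succ N ih =>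
    have hne : 1 - w / ((N : ℂ) + 1) ^ 2 ≠ 0 := by
      refine sub_ne_zero.mpr fun h ↦ (hw.trans_le' ?_).false
      calc (1 : ℝ) = ‖w / ((N : ℂ) + 1) ^ 2‖ := by rw [← h, norm_one]
        _ ≤ ‖w‖ := by
          rw [norm_div, norm_pow, ← Nat.cast_succ, Complex.norm_natCast]
          exact div_le_self (norm_nonneg w) (one_le_pow₀ (by simp))
    rw [prod_range_succ, ← ih, eq_mul_inv_iff_mul_eq₀ hne]
    linear_combination tsum_mul_pow_succ_sub hw N

lemma tendsto_tsum_mul_pow (hw : ‖w‖ < 1) :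
    Tendsto (fun N ↦ ∑' a, (zetaStarTwoTrunc a N : ℂ) * w ^ a) atTop
      (𝓝 (∑' a, (zetaStar (List.replicate a 2) : ℂ) * w ^ a)) :=
  tendsto_tsum_of_dominated_convergence
    ((summable_geometric_of_lt_one (norm_nonneg w) hw).mul_left 2)
    (fun a ↦ ((Complex.continuous_ofReal.tendsto _).comp (tendsto_zetaStar a)).mul_const _)
    (.of_forall fun N a ↦ norm_mul_pow_le a N)

end zetaStarTwoTrunc

lemma Complex.cot_half_sub_cot {x : ℂ} (hx : sin x ≠ 0) : cot (x / 2) - cot x = 1 / sin x := by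
  have hx2 : x = 2 * (x / 2) := by ring
  rw [hx2, sin_two_mul] at hx
  have hs : sin (x / 2) ≠ 0 := right_ne_zero_of_mul (left_ne_zero_of_mul hx)
  have hc : cos (x / 2) ≠ 0 := right_ne_zero_of_mul hx
  rw [cot_eq_cos_div_sin, cot_eq_cos_div_sin, hx2, sin_two_mul, cos_two_mul]
  field_simp
  ring

lemma Complex.div_two_mem_integerComplement {x : ℂ} (hx : x ∈ integerComplement) :
    x / 2 ∈ integerComplement := by
  rintro ⟨n, hn⟩
  exact hx ⟨2 * n, by push_cast; rw [hn]; ring⟩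

lemma Complex.mem_integerComplement_of_norm_lt_one {x : ℂ} (h0 : x ≠ 0) (h1 : ‖x‖ < 1) :
    x ∈ integerComplement := by
  rintro ⟨n, rfl⟩
  have : |(n : ℝ)| < 1 := by simpa using h1
  have : n = 0 := Int.abs_lt_one_iff.mp (by exact_mod_cast this)
  simp_all

lemma cotTerm_div_two (x : ℂ) (n : ℕ) : cotTerm (x / 2) n = 2 * cotTerm x (2 * n + 1) := by
  simp only [cotTerm]
  push_cast
  rw [show x / 2 - (n + 1) = (x - (2 * n + 1 + 1)) / 2 by ring,
    show x / 2 + (n + 1) = (x + (2 * n + 1 + 1)) / 2 by ring]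
  simp only [one_div_div]
  ring

lemma pi_div_sin_series_rep {x : ℂ} (hx : x ∈ integerComplement) :
    π / sin (π * x) - 1 / x = ∑' n : ℕ, (-1) ^ (n + 1) * cotTerm x n := by
  have hs := summable_cotTerm hx
  have heven : Summable fun k ↦ cotTerm x (2 * k) :=
    hs.comp_injective (mul_right_injective₀ two_ne_zero)
  have hodd : Summable fun k ↦ cotTerm x (2 * k + 1) :=
    hs.comp_injective ((add_left_injective 1).comp (mul_right_injective₀ two_ne_zero))
  have halt : ∑' n : ℕ, (-1) ^ (n + 1) * cotTerm x n =
      -∑' k, cotTerm x (2 * k) + ∑' k, cotTerm x (2 * k + 1) := by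
    have e (k : ℕ) : (-1 : ℂ) ^ (2 * k + 1) * cotTerm x (2 * k) = -cotTerm x (2 * k) := by
      simp [pow_succ, pow_mul]
    have o (k : ℕ) :
        (-1 : ℂ) ^ (2 * k + 1 + 1) * cotTerm x (2 * k + 1) = cotTerm x (2 * k + 1) := by
      simp [pow_succ, pow_mul]
    rw [← tsum_even_add_odd (by simpa only [e] using heven.neg) (by simpa only [o] using hodd)]
    simp only [e, o, tsum_neg]
  have hhalf : π * cot (π * (x / 2)) - 1 / (x / 2) = 2 * ∑' k, cotTerm x (2 * k + 1) := by
    rw [cot_series_rep' (div_two_mem_integerComplement hx), ← tsum_mul_left]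
    exact tsum_congr (cotTerm_div_two x)
  have hcot :
      π * cot (π * x) - 1 / x = ∑' k, cotTerm x (2 * k) + ∑' k, cotTerm x (2 * k + 1) := by
    rw [cot_series_rep' hx, tsum_even_add_odd heven hodd]
  have hsin : π / sin (π * x) = π * cot (π * (x / 2)) - π * cot (π * x) := by
    rw [← mul_sub, mul_div_assoc', cot_half_sub_cot (sin_pi_mul_ne_zero hx), mul_one_div]
  rw [halt, hsin]
  rw [one_div_div] at hhalf
  linear_combination hhalf - hcot

lemma one_sub_two_mul_tsum_eq_pi_mul_div_sin {z : ℂ} (hz : z ∈ integerComplement) :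
    1 - 2 * z ^ 2 * ∑' k : ℕ+, (-1 : ℂ) ^ (k : ℕ) / ((k : ℂ) ^ 2 - z ^ 2) =
      π * z / sin (π * z) := by
  have hterm (n : ℕ) : 2 * z ^ 2 * ((-1 : ℂ) ^ (n + 1) / (((n + 1 : ℕ) : ℂ) ^ 2 - z ^ 2)) =
      -(z * ((-1) ^ (n + 1) * cotTerm z n)) := by
    have h1 : z - (n + 1) ≠ 0 := by
      simpa [sub_eq_add_neg] using integerComplement_add_ne_zero hz (-(n + 1) : ℤ)
    have h2 : z + (n + 1) ≠ 0 := by simpa using integerComplement_add_ne_zero hz (n + 1 : ℤ)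
    have h3 : ((n + 1 : ℕ) : ℂ) ^ 2 - z ^ 2 ≠ 0 := by
      push_cast
      rw [show ((n : ℂ) + 1) ^ 2 - z ^ 2 = -((z - (n + 1)) * (z + (n + 1))) by ring]
      exact neg_ne_zero.mpr (mul_ne_zero h1 h2)
    simp only [cotTerm]
    field_simp
    push_cast
    ring
  rw [tsum_pnat_eq_tsum_succ (f := fun k : ℕ ↦ (-1 : ℂ) ^ k / ((k : ℂ) ^ 2 - z ^ 2)),
    ← tsum_mul_left, tsum_congr hterm, tsum_neg, tsum_mul_left, ← pi_div_sin_series_rep hz]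
  have hz0 := integerComplement.ne_zero hz
  field_simp
  ring

lemma tsum_zetaStar_two_mul_pow_eq {z : ℂ} (hz0 : z ≠ 0) (hz : ‖z‖ < 1) :
    ∑' a, (zetaStar (List.replicate a 2) : ℂ) * z ^ (2 * a) = π * z / sin (π * z) := by
  have hw : ‖z ^ 2‖ < 1 := by
    rw [norm_pow]
    exact pow_lt_one₀ (norm_nonneg z) hz two_ne_zero
  have hprod := (tendsto_euler_sin_prod' hz0).inv₀ (div_ne_zero
    (sin_pi_mul_ne_zero (mem_integerComplement_of_norm_lt_one hz0 hz))
    (mul_ne_zero (ofReal_ne_zero.mpr pi_ne_zero) hz0))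
  rw [inv_div] at hprod
  simp_rw [pow_mul]
  refine tendsto_nhds_unique (zetaStarTwoTrunc.tendsto_tsum_mul_pow hw) (hprod.congr fun N ↦ ?_)
  rw [zetaStarTwoTrunc.tsum_mul_pow_eq_prod hw, prod_inv_distrib]
  simp [sineTerm, neg_div, sub_eq_add_neg]

theorem stmt9 (z : ℂ) (hz : ‖z‖ < 1) :
    ∑' a : ℕ, (zetaStar (List.replicate a 2) : ℂ) * z ^ (2 * a)
      = 1 - 2 * z ^ 2 * ∑' k : ℕ+, (-1 : ℂ) ^ (k : ℕ) / ((k : ℂ) ^ 2 - z ^ 2) := by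
  rcases eq_or_ne z 0 with rfl | hz0
  · rw [tsum_eq_single 0 fun a ha ↦ by simp [ha]]
    simp [zetaStar]
  · rw [tsum_zetaStar_two_mul_pow_eq hz0 hz,
      one_sub_two_mul_tsum_eq_pi_mul_div_sin (mem_integerComplement_of_norm_lt_one hz0 hz)]
end
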